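/- Assume A has full row rank. Then for every nonempty face F of Y⁰, gph S restricted to D_F equals S_F; i.e., for every (λ,b) ∈ D_F, S(λ,b) = {x : x_i ≥ 0 and A_iᵀ(b−Ax) = λ for i ∈ 𝒜⁺(F); x_i = 0 and |A_iᵀ(b−Ax)| ≤ λ for i ∈ 𝒜⁰(F); x_i ≤ 0 and A_iᵀ(b−Ax) = −λ for i ∈ 𝒜⁻(F)}. -/

import Mathlib

open Set

noncomputable section

variable {m n : ℕ}

/-- Euclidean distance between two vectors. -/
def en {k : ℕ} (x x' : Fin k → ℝ) : ℝ := Real.sqrt (∑ i, (x i - x' i) ^ 2)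

/-- The ℓ₁ norm. -/
def l1 {k : ℕ} (x : Fin k → ℝ) : ℝ := ∑ i, |x i|

/-- Squared Euclidean norm. -/
def sqnorm {k : ℕ} (y : Fin k → ℝ) : ℝ := ∑ i, (y i) ^ 2

/-- `A_iᵀ y`, the dot product of the `i`-th column of `A` with `y`. -/
def colDot (A : Matrix (Fin m) (Fin n) ℝ) (i : Fin n) (y : Fin m → ℝ) : ℝ := ∑ k, A k i * y k

/-- The dual feasible set `Y⁰ = {y : ‖Aᵀy‖_∞ ≤ 1}`. -/
def Ydual (A : Matrix (Fin m) (Fin n) ℝ) : Set (Fin m → ℝ) := {y | ∀ i, |colDot A i y| ≤ 1}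

/-- `F` is a face of `C`: the argmax set of a linear functional over `C`. -/
def IsFaceOf (C F : Set (Fin m → ℝ)) : Prop :=
  ∃ v : Fin m → ℝ, F = {y | y ∈ C ∧ ∀ z ∈ C, ∑ k, v k * z k ≤ ∑ k, v k * y k}

/-- `𝒜⁺(F)`. -/
def Aplus (A : Matrix (Fin m) (Fin n) ℝ) (F : Set (Fin m → ℝ)) : Set (Fin n) :=
  {i | ∀ y ∈ F, colDot A i y = 1}

/-- `𝒜⁻(F)`. -/
def Aminus (A : Matrix (Fin m) (Fin n) ℝ) (F : Set (Fin m → ℝ)) : Set (Fin n) :=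
  {i | ∀ y ∈ F, colDot A i y = -1}

/-- `𝒜⁰(F)`. -/
def Azero (A : Matrix (Fin m) (Fin n) ℝ) (F : Set (Fin m → ℝ)) : Set (Fin n) :=
  {i | ∃ y ∈ F, -1 < colDot A i y ∧ colDot A i y < 1}

/-- Solution set of the extended ℓ₁ regularization problem:
basis pursuit when `lam = 0`, Lasso-type problem when `lam > 0`. -/
def Sol (A : Matrix (Fin m) (Fin n) ℝ) (lam : ℝ) (b : Fin m → ℝ) : Set (Fin n → ℝ) :=
  if lam = 0 then
    {x | A.mulVec x = b ∧ ∀ z, A.mulVec z = b → l1 x ≤ l1 z}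
  else
    {x | ∀ z, l1 x + 1 / (2 * lam) * sqnorm (A.mulVec x - b) ≤
          l1 z + 1 / (2 * lam) * sqnorm (A.mulVec z - b)}

/-- Graph of the solution multifunction `S`. -/
def gphS (A : Matrix (Fin m) (Fin n) ℝ) : Set (ℝ × (Fin m → ℝ) × (Fin n → ℝ)) :=
  {p | 0 ≤ p.1 ∧ p.2.2 ∈ Sol A p.1 p.2.1}

/-- `A_iᵀ(b − Ax)`. -/
def resid (A : Matrix (Fin m) (Fin n) ℝ) (b : Fin m → ℝ) (x : Fin n → ℝ) (i : Fin n) : ℝ :=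
  colDot A i (b - A.mulVec x)

/-- The polyhedral cone `S_F` associated with a face `F` of `Y⁰`. -/
def SFace (A : Matrix (Fin m) (Fin n) ℝ) (F : Set (Fin m → ℝ)) :
    Set (ℝ × (Fin m → ℝ) × (Fin n → ℝ)) :=
  {p | 0 ≤ p.1 ∧
    (∀ i ∈ Aplus A F, 0 ≤ p.2.2 i ∧ resid A p.2.1 p.2.2 i = p.1) ∧
    (∀ i ∈ Azero A F, p.2.2 i = 0 ∧ |resid A p.2.1 p.2.2 i| ≤ p.1) ∧
    (∀ i ∈ Aminus A F, p.2.2 i ≤ 0 ∧ resid A p.2.1 p.2.2 i = -p.1)}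

/-- `cl W(I⁺, I⁰, I⁻)`. -/
def clW (Ip I0 Im : Set (Fin n)) : Set (Fin n → ℝ) :=
  {x | (∀ i ∈ Ip, 0 ≤ x i) ∧ (∀ i ∈ I0, x i = 0) ∧ (∀ i ∈ Im, x i ≤ 0)}

/-- `W(I⁺, I⁰, I⁻)`. -/
def Wset (Ip I0 Im : Set (Fin n)) : Set (Fin n → ℝ) :=
  {x | (∀ i ∈ Ip, 0 < x i) ∧ (∀ i ∈ I0, x i = 0) ∧ (∀ i ∈ Im, x i < 0)}

/-- The projection `D_F` of `S_F` onto the `(λ, b)` coordinates. -/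
def DFace (A : Matrix (Fin m) (Fin n) ℝ) (F : Set (Fin m → ℝ)) : Set (ℝ × (Fin m → ℝ)) :=
  (fun p => (p.1, p.2.1)) '' SFace A F

/-- The convex subdifferential of the ℓ₁ norm. -/
def l1subdiff {k : ℕ} (x : Fin k → ℝ) : Set (Fin k → ℝ) :=
  {v | ∀ z, l1 x + ∑ i, v i * (z i - x i) ≤ l1 z}

/-- Polyhedral subset of `ℝ × ℝ^m × ℝ^n`: a finite intersection of closed half-spaces. -/
def IsPolyhedral3 (s : Set (ℝ × (Fin m → ℝ) × (Fin n → ℝ))) : Prop :=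
  ∃ (k : ℕ) (a : Fin k → ℝ × (Fin m → ℝ) × (Fin n → ℝ)) (β : Fin k → ℝ),
    s = {p | ∀ j, (a j).1 * p.1 + (∑ t, (a j).2.1 t * p.2.1 t) +
          (∑ t, (a j).2.2 t * p.2.2 t) ≤ β j}

/-- Lipschitz continuity of a set-valued map on a set `X`, with constant `κ`. -/
def LipOn {a b : ℕ} (G : (Fin a → ℝ) → Set (Fin b → ℝ)) (X : Set (Fin a → ℝ)) (κ : ℝ) : Prop :=
  (∀ x ∈ X, (G x).Nonempty ∧ IsClosed (G x)) ∧
  ∀ x ∈ X, ∀ x' ∈ X, ∀ y' ∈ G x', ∃ y ∈ G x, en y' y ≤ κ * en x' x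

end
section aux
variable {m n : ℕ}

/-- The sign/residual pattern associated to a face. -/
def Pat (A : Matrix (Fin m) (Fin n) ℝ) (F : Set (Fin m → ℝ)) (lam : ℝ)
    (b : Fin m → ℝ) (x : Fin n → ℝ) : Prop :=
  (∀ i ∈ Aplus A F, 0 ≤ x i ∧ resid A b x i = lam) ∧
  (∀ i ∈ Azero A F, x i = 0 ∧ |resid A b x i| ≤ lam) ∧
  (∀ i ∈ Aminus A F, x i ≤ 0 ∧ resid A b x i = -lam)

lemma face_sub {A : Matrix (Fin m) (Fin n) ℝ} {F : Set (Fin m → ℝ)}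
    (hface : IsFaceOf (Ydual A) F) : F ⊆ Ydual A := by
  obtain ⟨v, rfl⟩ := hface; intro y hy; exact hy.1

lemma colDot_add (A : Matrix (Fin m) (Fin n) ℝ) (i : Fin n) (y z : Fin m → ℝ) :
    colDot A i (fun k => (y k + z k) / 2) = (colDot A i y + colDot A i z) / 2 := by
  simp only [colDot, ← Finset.sum_add_distrib, Finset.sum_div]
  congr 1; ext k; ring

lemma face_mid {A : Matrix (Fin m) (Fin n) ℝ} {F : Set (Fin m → ℝ)}
    (hface : IsFaceOf (Ydual A) F) {y z : Fin m → ℝ} (hy : y ∈ F) (hz : z ∈ F) :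
    (fun k => (y k + z k) / 2) ∈ F := by
  obtain ⟨v, rfl⟩ := hface
  refine ⟨?_, ?_⟩
  · intro i
    have h1 := hy.1 i
    have h2 := hz.1 i
    rw [colDot_add]
    rw [abs_le] at h1 h2 ⊢
    constructor <;> [linarith [h1.1, h2.1]; linarith [h1.2, h2.2]]
  · intro w hw
    have h1 := hy.2 w hw
    have h2 := hz.2 w hw
    have : ∑ k, v k * ((y k + z k) / 2) = (∑ k, v k * y k + ∑ k, v k * z k) / 2 := by
      rw [← Finset.sum_add_distrib, Finset.sum_div]; congr 1; ext k; ring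
    rw [this]; linarith

lemma cover {A : Matrix (Fin m) (Fin n) ℝ} {F : Set (Fin m → ℝ)}
    (hface : IsFaceOf (Ydual A) F) (hne : F.Nonempty) (i : Fin n) :
    i ∈ Aplus A F ∨ i ∈ Azero A F ∨ i ∈ Aminus A F := by
  by_cases hz : ∃ y ∈ F, -1 < colDot A i y ∧ colDot A i y < 1
  · exact Or.inr (Or.inl hz)
  push_neg at hz
  have hval : ∀ y ∈ F, colDot A i y = 1 ∨ colDot A i y = -1 := by
    intro y hy
    have hb := abs_le.mp (face_sub hface hy i)
    have := hz y hy
    rcases lt_or_eq_of_le hb.1 with h | h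
    · exact Or.inl (le_antisymm hb.2 (this h))
    · exact Or.inr h.symm
  obtain ⟨y0, hy0⟩ := hne
  rcases hval y0 hy0 with h0 | h0
  · left; intro y hy
    rcases hval y hy with h | h
    · exact h
    · exfalso
      have hm := face_mid hface hy0 hy
      have hc : colDot A i (fun k => (y0 k + y k) / 2) = 0 := by
        rw [colDot_add, h0, h]; ring
      rcases hval _ hm with h' | h' <;> rw [hc] at h' <;> norm_num at h'
  · right; right; intro y hy
    rcases hval y hy with h | h
    · exfalso
      have hm := face_mid hface hy0 hy
      have hc : colDot A i (fun k => (y0 k + y k) / 2) = 0 := by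
        rw [colDot_add, h0, h]; ring
      rcases hval _ hm with h' | h' <;> rw [hc] at h' <;> norm_num at h'
    · exact h

lemma sum_colDot (A : Matrix (Fin m) (Fin n) ℝ) (y : Fin m → ℝ) (x : Fin n → ℝ) :
    ∑ i, colDot A i y * x i = ∑ k, y k * A.mulVec x k := by
  simp only [colDot, Matrix.mulVec, dotProduct, Finset.sum_mul, Finset.mul_sum]
  rw [Finset.sum_comm]
  congr 1; ext k; congr 1; ext i; ring

end aux
section aux2
variable {m n : ℕ}

lemma resid_zero_imp {A : Matrix (Fin m) (Fin n) ℝ} (hrank : A.rank = m)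
    {b : Fin m → ℝ} {x : Fin n → ℝ} (h : ∀ i, resid A b x i = 0) :
    A.mulVec x = b := by
  have hsurj : Function.Surjective A.mulVec := by
    have h : LinearMap.range A.mulVecLin = ⊤ := by
      apply Submodule.eq_top_of_finrank_eq
      rw [← Matrix.rank, hrank]; simp
    intro b
    exact (LinearMap.range_eq_top.mp h) b
  set u : Fin m → ℝ := b - A.mulVec x with hu
  obtain ⟨w, hw⟩ := hsurj u
  have hcw : ∑ i, colDot A i u * w i = 0 := by
    apply Finset.sum_eq_zero; intro i _
    have := h i
    simp only [resid] at this
    rw [← hu] at this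
    rw [this, zero_mul]
  rw [sum_colDot, hw] at hcw
  have huz : ∀ k, u k = 0 := by
    intro k
    have hsq : ∑ k, u k ^ 2 = 0 := by
      rw [← hcw]; congr 1; ext k; ring
    have := (Finset.sum_eq_zero_iff_of_nonneg (fun k _ => sq_nonneg (u k))).mp hsq k
      (Finset.mem_univ k)
    exact pow_eq_zero_iff (by norm_num) |>.mp this
  have : u = 0 := funext huz
  have : b - A.mulVec x = 0 := this
  funext k
  have := congrFun this k
  simp only [Pi.sub_apply, Pi.zero_apply, sub_eq_zero] at this
  exact this.symm

lemma termwise {s x : Fin n → ℝ} (hb : ∀ i, s i * x i ≤ |x i|)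
    (hsum : ∑ i, |x i| ≤ ∑ i, s i * x i) : ∀ i, s i * x i = |x i| := by
  intro i
  by_contra hne
  have hlt : s i * x i < |x i| := lt_of_le_of_ne (hb i) hne
  have : ∑ j, s j * x j < ∑ j, |x j| :=
    Finset.sum_lt_sum (fun j _ => hb j) ⟨i, Finset.mem_univ i, hlt⟩
  linarith

/-- Pattern gives a dual certificate pointwise: `⟨a_i, y'⟩ x_i = |x_i|` for `y' ∈ F`. -/
lemma pat_cert {A : Matrix (Fin m) (Fin n) ℝ} {F : Set (Fin m → ℝ)}
    (hface : IsFaceOf (Ydual A) F) (hne : F.Nonempty)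
    {lam : ℝ} {b : Fin m → ℝ} {x : Fin n → ℝ} (hx : Pat A F lam b x)
    {y' : Fin m → ℝ} (hy' : y' ∈ F) (i : Fin n) : colDot A i y' * x i = |x i| := by
  rcases cover hface hne i with h | h | h
  · rw [h y' hy', one_mul, abs_of_nonneg (hx.1 i h).1]
  · rw [(hx.2.1 i h).1]; simp
  · rw [h y' hy']
    have := (hx.2.2 i h).1
    rw [abs_of_nonpos this]; ring

lemma pat_kkt {A : Matrix (Fin m) (Fin n) ℝ} {F : Set (Fin m → ℝ)}
    (hface : IsFaceOf (Ydual A) F) (hne : F.Nonempty)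
    {lam : ℝ} (hlam : 0 ≤ lam) {b : Fin m → ℝ} {x : Fin n → ℝ} (hx : Pat A F lam b x)
    (i : Fin n) : |resid A b x i| ≤ lam ∧ resid A b x i * x i = lam * |x i| := by
  rcases cover hface hne i with h | h | h
  · obtain ⟨h1, h2⟩ := hx.1 i h
    rw [h2, abs_of_nonneg hlam, abs_of_nonneg h1]
    exact ⟨le_refl _, rfl⟩
  · obtain ⟨h1, h2⟩ := hx.2.1 i h
    rw [h1]; simpa using h2
  · obtain ⟨h1, h2⟩ := hx.2.2 i h
    rw [h2, abs_neg, abs_of_nonneg hlam, abs_of_nonpos h1]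
    exact ⟨le_refl _, by ring⟩

end aux2
section aux3
variable {m n : ℕ}

lemma kkt_opt {A : Matrix (Fin m) (Fin n) ℝ} {lam : ℝ} (hl : 0 < lam)
    {b : Fin m → ℝ} {x : Fin n → ℝ}
    (h : ∀ i, |resid A b x i| ≤ lam ∧ resid A b x i * x i = lam * |x i|) :
    x ∈ Sol A lam b := by
  rw [Sol, if_neg hl.ne']
  intro z
  set c : ℝ := 1 / (2 * lam) with hc
  have hcpos : 0 < c := by positivity
  have hsub : A.mulVec (z - x) = A.mulVec z - A.mulVec x := Matrix.mulVec_sub A z x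
  have hq : sqnorm (A.mulVec z - b) = sqnorm (A.mulVec x - b)
      + (∑ k, (A.mulVec z k - A.mulVec x k) ^ 2)
      + 2 * ∑ k, (A.mulVec x k - b k) * (A.mulVec (z - x) k) := by
    simp only [sqnorm, Pi.sub_apply, hsub, Finset.mul_sum, ← Finset.sum_add_distrib]
    apply Finset.sum_congr rfl
    intro k _; ring
  have hcross : ∑ k, (A.mulVec x k - b k) * (A.mulVec (z - x) k)
      = -∑ i, resid A b x i * (z i - x i) := by
    have h1 := sum_colDot A (b - A.mulVec x) (z - x)
    simp only [Pi.sub_apply] at h1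
    simp only [resid]
    rw [h1, ← Finset.sum_neg_distrib]
    apply Finset.sum_congr rfl
    intro k _; ring
  have hsplit : ∑ i, resid A b x i * (z i - x i)
      = (∑ i, resid A b x i * z i) - lam * l1 x := by
    simp only [mul_sub, Finset.sum_sub_distrib, l1, Finset.mul_sum]
    congr 1
    apply Finset.sum_congr rfl
    intro i _; exact (h i).2
  have hzb : ∑ i, resid A b x i * z i ≤ lam * l1 z := by
    rw [l1, Finset.mul_sum]
    apply Finset.sum_le_sum
    intro i _
    calc resid A b x i * z i ≤ |resid A b x i * z i| := le_abs_self _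
      _ = |resid A b x i| * |z i| := abs_mul _ _
      _ ≤ lam * |z i| := mul_le_mul_of_nonneg_right (h i).1 (abs_nonneg _)
  have hS : 0 ≤ ∑ k, (A.mulVec z k - A.mulVec x k) ^ 2 :=
    Finset.sum_nonneg fun k _ => sq_nonneg _
  have hkey : lam * l1 x - lam * l1 z ≤ ∑ k, (A.mulVec x k - b k) * (A.mulVec (z - x) k) := by
    rw [hcross, hsplit]; linarith
  have e2 : l1 x - l1 z ≤ 2 * (c * ∑ k, (A.mulVec x k - b k) * (A.mulVec (z - x) k)) := by
    have h3 := mul_le_mul_of_nonneg_left hkey hcpos.le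
    have h4 : c * (lam * l1 x - lam * l1 z) = (l1 x - l1 z) / 2 := by
      rw [hc]; field_simp
    linarith
  have e1 : c * sqnorm (A.mulVec z - b) = c * sqnorm (A.mulVec x - b)
      + c * (∑ k, (A.mulVec z k - A.mulVec x k) ^ 2)
      + 2 * (c * ∑ k, (A.mulVec x k - b k) * (A.mulVec (z - x) k)) := by
    rw [hq]; ring
  have e3 : 0 ≤ c * (∑ k, (A.mulVec z k - A.mulVec x k) ^ 2) := mul_nonneg hcpos.le hS
  linarith

lemma sol_residual_eq {A : Matrix (Fin m) (Fin n) ℝ} {lam : ℝ} (hl : 0 < lam)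
    {b : Fin m → ℝ} {x x' : Fin n → ℝ}
    (hx : x ∈ Sol A lam b) (hx' : x' ∈ Sol A lam b) :
    A.mulVec x = A.mulVec x' ∧ l1 x = l1 x' := by
  rw [Sol, if_neg hl.ne'] at hx hx'
  set c : ℝ := 1 / (2 * lam) with hc
  have hcpos : 0 < c := by positivity
  set w : Fin n → ℝ := fun i => (x i + x' i) / 2 with hw
  have hAw : ∀ k, A.mulVec w k = (A.mulVec x k + A.mulVec x' k) / 2 := by
    intro k
    simp only [Matrix.mulVec, dotProduct, hw, ← Finset.sum_add_distrib, Finset.sum_div]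
    apply Finset.sum_congr rfl
    intro i _; ring
  have hl1w : l1 w ≤ (l1 x + l1 x') / 2 := by
    simp only [l1, hw, ← Finset.sum_add_distrib, Finset.sum_div]
    apply Finset.sum_le_sum
    intro i _
    rw [abs_div, show |(2:ℝ)| = 2 by norm_num]
    linarith [abs_add_le (x i) (x' i)]
  set S : ℝ := ∑ k, (A.mulVec x k - A.mulVec x' k) ^ 2 with hSdef
  have hS : 0 ≤ S := Finset.sum_nonneg fun k _ => sq_nonneg _
  have hkey : sqnorm (A.mulVec w - b) + S / 4
      = sqnorm (A.mulVec x - b) / 2 + sqnorm (A.mulVec x' - b) / 2 := by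
    simp only [sqnorm, hSdef, Pi.sub_apply, Finset.sum_div, ← Finset.sum_add_distrib]
    apply Finset.sum_congr rfl
    intro k _
    rw [hAw k]; ring
  have h1 := hx w
  have h2 := hx' w
  have hQw : c * sqnorm (A.mulVec w - b) = c * sqnorm (A.mulVec x - b) / 2
      + c * sqnorm (A.mulVec x' - b) / 2 - c * S / 4 := by
    have : sqnorm (A.mulVec w - b)
        = sqnorm (A.mulVec x - b) / 2 + sqnorm (A.mulVec x' - b) / 2 - S / 4 := by
      linarith
    rw [this]; ring
  have hcS : c * S ≤ 0 := by linarith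
  have hS0 : S = 0 := by
    by_contra hne
    have hSpos : 0 < S := lt_of_le_of_ne hS (Ne.symm hne)
    nlinarith
  have hAeq : A.mulVec x = A.mulVec x' := by
    funext k
    have hk := (Finset.sum_eq_zero_iff_of_nonneg
      (fun k (_ : k ∈ Finset.univ) => sq_nonneg (A.mulVec x k - A.mulVec x' k))).mp hS0 k
      (Finset.mem_univ k)
    have := pow_eq_zero_iff (n := 2) (by norm_num) |>.mp hk
    linarith [sub_eq_zero.mp this]
  refine ⟨hAeq, le_antisymm ?_ ?_⟩
  · have := hx x'; rw [hAeq] at this; linarith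
  · have := hx' x; rw [hAeq] at this; linarith
end aux3
section aux4
variable {m n : ℕ}

lemma ydual_bound {A : Matrix (Fin m) (Fin n) ℝ} {y : Fin m → ℝ} (hy : y ∈ Ydual A)
    (z : Fin n → ℝ) (i : Fin n) : colDot A i y * z i ≤ |z i| := by
  calc colDot A i y * z i ≤ |colDot A i y * z i| := le_abs_self _
    _ = |colDot A i y| * |z i| := abs_mul _ _
    _ ≤ 1 * |z i| := mul_le_mul_of_nonneg_right (hy i) (abs_nonneg _)
    _ = |z i| := one_mul _

lemma pat_sum_cert {A : Matrix (Fin m) (Fin n) ℝ} {F : Set (Fin m → ℝ)}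
    (hface : IsFaceOf (Ydual A) F) (hne : F.Nonempty)
    {lam : ℝ} {b : Fin m → ℝ} {x : Fin n → ℝ} (hx : Pat A F lam b x)
    {y' : Fin m → ℝ} (hy' : y' ∈ F) :
    ∑ k, y' k * A.mulVec x k = l1 x := by
  rw [← sum_colDot, l1]
  exact Finset.sum_congr rfl fun i _ => pat_cert hface hne hx hy' i

lemma pat_sol {A : Matrix (Fin m) (Fin n) ℝ} (hrank : A.rank = m)
    {F : Set (Fin m → ℝ)} (hface : IsFaceOf (Ydual A) F) (hne : F.Nonempty)
    {lam : ℝ} (hlam : 0 ≤ lam) {b : Fin m → ℝ} {x : Fin n → ℝ}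
    (hx : Pat A F lam b x) : x ∈ Sol A lam b := by
  rcases eq_or_lt_of_le hlam with h0 | hpos
  · -- lam = 0
    have hres0 : ∀ i, resid A b x i = 0 := by
      intro i
      have := (pat_kkt hface hne hlam hx i).1
      rw [← h0] at this
      exact abs_nonpos_iff.mp this
    have hAx : A.mulVec x = b := resid_zero_imp hrank hres0
    rw [Sol, if_pos h0.symm]
    refine ⟨hAx, ?_⟩
    intro z hz
    obtain ⟨y0, hy0⟩ := id hne
    have hx1 : l1 x = ∑ k, y0 k * b k := by
      rw [← pat_sum_cert hface hne hx hy0, hAx]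
    have hz1 : ∑ k, y0 k * b k ≤ l1 z := by
      rw [← hz, ← sum_colDot, l1]
      exact Finset.sum_le_sum fun i _ => ydual_bound (face_sub hface hy0) z i
    linarith
  · exact kkt_opt hpos (pat_kkt hface hne hlam hx)
end aux4
theorem stmt17 {m n : ℕ} (A : Matrix (Fin m) (Fin n) ℝ) (hrank : A.rank = m)
    (F : Set (Fin m → ℝ)) (hface : IsFaceOf (Ydual A) F) (hne : F.Nonempty) :
    ∀ (lam : ℝ) (b : Fin m → ℝ), (lam, b) ∈ DFace A F →
      Sol A lam b = {x | (∀ i ∈ Aplus A F, 0 ≤ x i ∧ resid A b x i = lam) ∧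
        (∀ i ∈ Azero A F, x i = 0 ∧ |resid A b x i| ≤ lam) ∧
        (∀ i ∈ Aminus A F, x i ≤ 0 ∧ resid A b x i = -lam)} := by
  intro lam b hD
  obtain ⟨p, hpS, hpe⟩ := hD
  obtain ⟨h1, h2⟩ := Prod.mk.inj hpe
  subst h1; subst h2
  obtain ⟨hlam, hP, hZ, hM⟩ := hpS
  set lam := p.1 with hldef
  set b := p.2.1 with hbdef
  set x0 := p.2.2 with hx0def
  have hx0 : Pat A F lam b x0 := ⟨hP, hZ, hM⟩
  have hx0sol : x0 ∈ Sol A lam b := pat_sol hrank hface hne hlam hx0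
  ext x
  simp only [Set.mem_setOf_eq]
  constructor
  · intro hxsol
    have hAeql1 : A.mulVec x = A.mulVec x0 ∧ l1 x = l1 x0 := by
      rcases eq_or_lt_of_le hlam with h0 | hpos
      · rw [Sol, if_pos h0.symm] at hxsol hx0sol
        exact ⟨hxsol.1.trans hx0sol.1.symm,
          le_antisymm (hxsol.2 x0 hx0sol.1) (hx0sol.2 x hxsol.1)⟩
      · exact sol_residual_eq hpos hxsol hx0sol
    obtain ⟨hAeq, hl1eq⟩ := hAeql1
    have hres : ∀ i, resid A b x i = resid A b x0 i := by
      intro i; simp only [resid, hAeq]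
    have hterm : ∀ y' ∈ F, ∀ i, colDot A i y' * x i = |x i| := by
      intro y' hy'
      have hsum : ∑ i, colDot A i y' * x i = ∑ i, |x i| := by
        rw [sum_colDot, hAeq, pat_sum_cert hface hne hx0 hy', ← hl1eq]; rfl
      exact termwise (fun i => ydual_bound (face_sub hface hy') x i) (le_of_eq hsum.symm)
    refine ⟨?_, ?_, ?_⟩
    · intro i hi
      obtain ⟨y0, hy0⟩ := id hne
      have ht := hterm y0 hy0 i
      rw [hi y0 hy0, one_mul] at ht
      exact ⟨by rw [ht]; exact abs_nonneg _, by rw [hres i]; exact (hx0.1 i hi).2⟩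
    · intro i hi
      obtain ⟨y', hy', hlt1, hlt2⟩ := hi
      have ht := hterm y' hy' i
      have hxi : x i = 0 := by
        by_contra hnz
        have habs : 0 < |x i| := abs_pos.mpr hnz
        have hlt : colDot A i y' * x i < |x i| := by
          calc colDot A i y' * x i ≤ |colDot A i y'| * |x i| := by
                rw [← abs_mul]; exact le_abs_self _
            _ < 1 * |x i| := by
                apply mul_lt_mul_of_pos_right _ habs
                rw [abs_lt]; exact ⟨hlt1, hlt2⟩
            _ = |x i| := one_mul _
        rw [ht] at hlt; exact lt_irrefl _ hlt
      exact ⟨hxi, by rw [hres i]; exact (hx0.2.1 i ⟨y', hy', hlt1, hlt2⟩).2⟩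
    · intro i hi
      obtain ⟨y0, hy0⟩ := id hne
      have ht := hterm y0 hy0 i
      rw [hi y0 hy0] at ht
      refine ⟨by linarith [abs_nonneg (x i)], by rw [hres i]; exact (hx0.2.2 i hi).2⟩
  · intro hx
    exact pat_sol hrank hface hne hlam hx
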